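/- arXiv:2009.03607 — 4 statements merged into one kernel-verified Lean document; each statement's English description precedes it below -/
import Mathlib

section
/- If G : Δ_n → ℝ is λ-nice with 0 < λ ≤ 1, then G is (n^{1−λ}, λ)-locally Hölder continuous: there exists c ∈ (0,1) such that |G(x) − G(y)| ≤ n^{1−λ}·|x−y|₁^λ whenever x, y ∈ Δ_n and |x−y|₁ ≤ c. -/
/-!
Convexity makes the increment `g (t + d) - g t` nondecreasing in `t`, so over any interval of
length `d` in `[0,1]` it lies between `g d - g 0` and `g 1 - g (1 - d)`, both bounded by `d ^ λ`
by niceness. Summing over coordinates and applying Jensen's inequality to the concave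
`t ↦ t ^ λ` produces the factor `n ^ (1 - λ)`.
-/

open Finset

/-- A function `G` on the simplex `Δ_n` is `λ`-nice if it is a coordinatewise sum of a
convex `g : [0,1] → ℝ` with `g 0 = g 1 = 0` and `max(|g ε|, |g (1−ε)|) ≤ ε^λ` for all
sufficiently small `ε > 0`. -/
def IsNice (n : ℕ) (lam : ℝ) (G : (Fin n → ℝ) → ℝ) : Prop :=
  ∃ g : ℝ → ℝ, ConvexOn ℝ (Set.Icc (0:ℝ) 1) g ∧ g 0 = 0 ∧ g 1 = 0 ∧
    (∃ ε₀ > (0:ℝ), ∀ ε : ℝ, 0 < ε → ε < ε₀ →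
      max |g ε| |g (1 - ε)| ≤ ε ^ lam) ∧
    ∀ x ∈ stdSimplex ℝ (Fin n), G x = ∑ i, g (x i)

lemma ConvexOn.map_add_sub_map_le {s : Set ℝ} {f : ℝ → ℝ} (hf : ConvexOn ℝ s f) {x y d : ℝ}
    (hx : x ∈ s) (hyd : y + d ∈ s) (hxy : x ≤ y) (hd : 0 ≤ d) :
    f (x + d) - f x ≤ f (y + d) - f y := by
  rcases hd.eq_or_lt with rfl | hd
  · simp
  have hxd : x + d ∈ s := hf.1.ordConnected.out hx hyd ⟨by linarith, by linarith⟩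
  have hy : y ∈ s := hf.1.ordConnected.out hx hyd ⟨hxy, by linarith⟩
  have hslope : slope f x (x + d) ≤ slope f y (y + d) :=
    calc slope f x (x + d)
        ≤ slope f x (y + d) :=
          hf.slope_mono hx ⟨hxd, by simp [hd.ne']⟩ ⟨hyd, (by linarith : y + d ≠ x)⟩ (by linarith)
      _ = slope f (y + d) x := slope_comm _ _ _
      _ ≤ slope f (y + d) y :=
          hf.slope_mono hyd ⟨hx, (by linarith : x ≠ y + d)⟩ ⟨hy, by simp [hd.ne']⟩ hxy
      _ = slope f y (y + d) := slope_comm _ _ _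
  simpa [slope_def_field, div_le_div_iff_of_pos_right hd] using hslope

lemma ConvexOn.abs_sub_le_max_abs {g : ℝ → ℝ} (hg : ConvexOn ℝ (Set.Icc 0 1) g)
    (hg0 : g 0 = 0) (hg1 : g 1 = 0) {u v : ℝ} (hu : 0 ≤ u) (huv : u ≤ v) (hv : v ≤ 1) :
    |g v - g u| ≤ max |g (v - u)| |g (1 - (v - u))| := by
  have hlower : g (0 + (v - u)) - g 0 ≤ g (u + (v - u)) - g u :=
    hg.map_add_sub_map_le ⟨le_rfl, zero_le_one⟩ (by constructor <;> linarith) hu (by linarith)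
  have hupper : g (u + (v - u)) - g u ≤ g (1 - (v - u) + (v - u)) - g (1 - (v - u)) :=
    hg.map_add_sub_map_le ⟨hu, by linarith⟩ (by simp) (by linarith) (by linarith)
  simp only [zero_add, add_sub_cancel, sub_add_cancel, hg0, hg1] at hlower hupper
  rw [abs_le]
  constructor
  · linarith [neg_abs_le (g (v - u)), le_max_left |g (v - u)| |g (1 - (v - u))|]
  · linarith [neg_le_abs (g (1 - (v - u))), le_max_right |g (v - u)| |g (1 - (v - u))|]

lemma Real.sum_rpow_le_card_rpow_mul_rpow_sum {ι : Type*} (s : Finset ι) {f : ι → ℝ}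
    (hf : ∀ i ∈ s, 0 ≤ f i) {p : ℝ} (hp0 : 0 ≤ p) (hp1 : p ≤ 1) :
    ∑ i ∈ s, f i ^ p ≤ (#s : ℝ) ^ (1 - p) * (∑ i ∈ s, f i) ^ p := by
  rcases s.eq_empty_or_nonempty with rfl | hs
  · simp only [sum_empty]; positivity
  have hcard : (0 : ℝ) < #s := by exact_mod_cast hs.card_pos
  have hjensen : ∑ i ∈ s, (#s : ℝ)⁻¹ • f i ^ p ≤ (∑ i ∈ s, (#s : ℝ)⁻¹ • f i) ^ p :=
    (Real.concaveOn_rpow hp0 hp1).le_map_sum (fun _ _ ↦ by positivity)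
      (by simp [hcard.ne']) hf
  simp only [smul_eq_mul, ← mul_sum] at hjensen
  rw [Real.mul_rpow (by positivity) (sum_nonneg hf), Real.inv_rpow hcard.le,
    inv_mul_le_iff₀ hcard, ← mul_assoc] at hjensen
  rwa [Real.rpow_sub hcard, Real.rpow_one, div_eq_mul_inv]

lemma ConvexOn.abs_sub_le_abs_sub_rpow {g : ℝ → ℝ} (hg : ConvexOn ℝ (Set.Icc 0 1) g)
    (hg0 : g 0 = 0) (hg1 : g 1 = 0) {lam ε₀ : ℝ}
    (hsmall : ∀ ε : ℝ, 0 < ε → ε < ε₀ → max |g ε| |g (1 - ε)| ≤ ε ^ lam)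
    {a b : ℝ} (ha : a ∈ Set.Icc (0 : ℝ) 1) (hb : b ∈ Set.Icc (0 : ℝ) 1) (hab : |a - b| < ε₀) :
    |g a - g b| ≤ |a - b| ^ lam := by
  wlog hba : b ≤ a generalizing a b
  · rw [abs_sub_comm, abs_sub_comm a]
    exact this hb ha (by rwa [abs_sub_comm]) (le_of_not_ge hba)
  rcases hba.eq_or_lt with rfl | hba
  · simp only [sub_self, abs_zero]
    positivity
  rw [abs_of_pos (sub_pos.2 hba)] at hab ⊢
  exact (hg.abs_sub_le_max_abs hg0 hg1 hb.1 hba.le ha.2).trans (hsmall _ (sub_pos.2 hba) hab)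

/-- Any `λ`-nice function with `0 < λ ≤ 1` is `(n^{1−λ}, λ)`-locally Hölder continuous
with respect to the ℓ₁ norm. -/
theorem nice_implies_locally_holder (n : ℕ) (lam : ℝ) (hlam0 : 0 < lam) (hlam1 : lam ≤ 1)
    (G : (Fin n → ℝ) → ℝ) (hG : IsNice n lam G) :
    ∃ c ∈ Set.Ioo (0:ℝ) 1, ∀ x ∈ stdSimplex ℝ (Fin n), ∀ y ∈ stdSimplex ℝ (Fin n),
      (∑ i, |x i - y i|) ≤ c →
      |G x - G y| ≤ (n : ℝ) ^ ((1:ℝ) - lam) * (∑ i, |x i - y i|) ^ lam := by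
  obtain ⟨g, hconv, hg0, hg1, ⟨ε₀, hε₀, hsmall⟩, hG⟩ := hG
  have hc : 0 < min ε₀ 1 / 2 := by positivity
  have hcε₀ : min ε₀ 1 / 2 < ε₀ := by linarith [min_le_left ε₀ 1]
  refine ⟨min ε₀ 1 / 2, ⟨hc, by linarith [min_le_right ε₀ 1]⟩, fun x hx y hy hxy ↦ ?_⟩
  have hcoord (i : Fin n) : |g (x i) - g (y i)| ≤ |x i - y i| ^ lam :=
    hconv.abs_sub_le_abs_sub_rpow hg0 hg1 hsmall (mem_Icc_of_mem_stdSimplex hx i)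
      (mem_Icc_of_mem_stdSimplex hy i)
      (((single_le_sum (fun j _ ↦ abs_nonneg (x j - y j)) (mem_univ i)).trans hxy).trans_lt hcε₀)
  calc |G x - G y| = |∑ i, (g (x i) - g (y i))| := by rw [hG x hx, hG y hy, sum_sub_distrib]
    _ ≤ ∑ i, |g (x i) - g (y i)| := abs_sum_le_sum_abs _ _
    _ ≤ ∑ i, |x i - y i| ^ lam := sum_le_sum fun i _ ↦ hcoord i
    _ ≤ (n : ℝ) ^ ((1:ℝ) - lam) * (∑ i, |x i - y i|) ^ lam := by
      simpa using Real.sum_rpow_le_card_rpow_mul_rpow_sum univ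
        (fun i _ ↦ abs_nonneg (x i - y i)) hlam0.le hlam1
end

section
/- Let g : [0,1] → ℝ be convex with g(0) = g(1) = 0 and suppose max(|g(ε)|, |g(1−ε)|) ≤ ε^λ for all sufficiently small ε > 0, where 0 < λ ≤ 1. Then for all x, y ∈ [0,1] with |x − y| sufficiently small, |g(x) − g(y)| ≤ |x − y|^λ. -/
/-!
Convexity makes the increment `g (x + h) - g x` nondecreasing in `x`, so on `[0, 1]` any
increment over an interval of length `h` lies between the increments at the two ends,
`g h - g 0 = g h` and `g 1 - g (1 - h) = -g (1 - h)`, both at most `h^λ` in absolute value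
by hypothesis.
-/

open Set

section LinearOrderedField

variable {𝕜 : Type*} [Field 𝕜] [LinearOrder 𝕜] [IsStrictOrderedRing 𝕜] {s : Set 𝕜} {f : 𝕜 → 𝕜}

theorem ConvexOn.slope_le_slope (hf : ConvexOn 𝕜 s f) {a b c d : 𝕜}
    (ha : a ∈ s) (hb : b ∈ s) (hc : c ∈ s) (hd : d ∈ s)
    (hab : a < b) (hcd : c < d) (hac : a ≤ c) (hbd : b ≤ d) :
    slope f a b ≤ slope f c d :=
  calc slope f a b ≤ slope f a d :=
        hf.slope_mono ha ⟨hb, hab.ne'⟩ ⟨hd, (hab.trans_le hbd).ne'⟩ hbd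
    _ = slope f d a := slope_comm f a d
    _ ≤ slope f d c := hf.slope_mono hd ⟨ha, (hab.trans_le hbd).ne⟩ ⟨hc, hcd.ne⟩ hac
    _ = slope f c d := slope_comm f d c

theorem ConvexOn.sub_le_sub_of_le_of_sub_eq (hf : ConvexOn 𝕜 s f) {a b c d : 𝕜}
    (ha : a ∈ s) (hb : b ∈ s) (hc : c ∈ s) (hd : d ∈ s)
    (hab : a ≤ b) (hac : a ≤ c) (hlen : b - a = d - c) :
    f b - f a ≤ f d - f c := by
  rcases hab.eq_or_lt with rfl | hab
  · obtain rfl : d = c := by linarith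
    simp
  have hslope := hf.slope_le_slope ha hb hc hd hab (by linarith) hac (by linarith)
  rwa [slope_def_field, slope_def_field, ← hlen, div_le_div_iff_of_pos_right (by linarith)]
    at hslope

end LinearOrderedField

theorem ConvexOn.abs_sub_le_max_of_unitInterval {g : ℝ → ℝ} (hg : ConvexOn ℝ (Icc 0 1) g)
    (h0 : g 0 = 0) (h1 : g 1 = 0) {x y : ℝ} (hx : x ∈ Icc (0 : ℝ) 1) (hy : y ∈ Icc (0 : ℝ) 1)
    (hxy : x ≤ y) : |g y - g x| ≤ max |g (y - x)| |g (1 - (y - x))| := by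
  have hmem : ∀ t, 0 ≤ t → t ≤ 1 → t ∈ Icc (0 : ℝ) 1 := fun t ht0 ht1 => ⟨ht0, ht1⟩
  have hleft : g (y - x) - g 0 ≤ g y - g x :=
    hg.sub_le_sub_of_le_of_sub_eq (hmem 0 le_rfl zero_le_one)
      (hmem _ (by linarith) (by linarith [hx.1, hy.2])) hx hy (by linarith) hx.1 (by ring)
  have hright : g y - g x ≤ g 1 - g (1 - (y - x)) :=
    hg.sub_le_sub_of_le_of_sub_eq hx hy (hmem _ (by linarith [hx.1, hy.2]) (by linarith))
      (hmem 1 zero_le_one le_rfl) hxy (by linarith [hy.2]) (by ring)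
  rw [h0] at hleft
  rw [h1] at hright
  rw [abs_le]
  constructor <;> linarith [neg_abs_le (g (y - x)), neg_le_abs (g (1 - (y - x))),
    le_max_left |g (y - x)| |g (1 - (y - x))|, le_max_right |g (y - x)| |g (1 - (y - x))|]

theorem nice_one_dim_holder_general (g : ℝ → ℝ) (lam : ℝ)
    (hconv : ConvexOn ℝ (Set.Icc (0:ℝ) 1) g) (h0 : g 0 = 0) (h1 : g 1 = 0)
    (htail : ∃ ε₀ > (0:ℝ), ∀ ε : ℝ, 0 < ε → ε < ε₀ → max |g ε| |g (1 - ε)| ≤ ε ^ lam) :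
    ∃ δ > (0:ℝ), ∀ x ∈ Set.Icc (0:ℝ) 1, ∀ y ∈ Set.Icc (0:ℝ) 1,
      |x - y| ≤ δ → |g x - g y| ≤ |x - y| ^ lam := by
  obtain ⟨ε₀, hε₀, htail⟩ := htail
  refine ⟨ε₀ / 2, by positivity, fun x hx y hy hδ => ?_⟩
  wlog hyx : y ≤ x generalizing x y
  · rw [abs_sub_comm (g x), abs_sub_comm x]
    exact this y hy x hx (by rwa [abs_sub_comm]) (by linarith)
  rw [abs_of_nonneg (sub_nonneg.mpr hyx)] at hδ ⊢
  rcases hyx.eq_or_lt with rfl | hlt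
  · simpa using Real.rpow_nonneg le_rfl lam
  calc |g x - g y| ≤ max |g (x - y)| |g (1 - (x - y))| :=
        hconv.abs_sub_le_max_of_unitInterval h0 h1 hy hx hyx
    _ ≤ (x - y) ^ lam := htail _ (sub_pos.mpr hlt) (by linarith)

/-- If `g : [0,1] → ℝ` is convex with `g 0 = g 1 = 0` and `max(|g ε|, |g (1−ε)|) ≤ ε^λ`
for all sufficiently small `ε > 0` (where `0 < λ ≤ 1`), then
`|g x − g y| ≤ |x − y|^λ` whenever `x, y ∈ [0,1]` are sufficiently close. -/
theorem nice_one_dim_holder (g : ℝ → ℝ) (lam : ℝ) (hlam0 : 0 < lam) (hlam1 : lam ≤ 1)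
    (hconv : ConvexOn ℝ (Set.Icc (0:ℝ) 1) g) (h0 : g 0 = 0) (h1 : g 1 = 0)
    (htail : ∃ ε₀ > (0:ℝ), ∀ ε : ℝ, 0 < ε → ε < ε₀ → max |g ε| |g (1 - ε)| ≤ ε ^ lam) :
    ∃ δ > (0:ℝ), ∀ x ∈ Set.Icc (0:ℝ) 1, ∀ y ∈ Set.Icc (0:ℝ) 1,
      |x - y| ≤ δ → |g x - g y| ≤ |x - y| ^ lam :=
  nice_one_dim_holder_general g lam hconv h0 h1 htail
end

section
/- For any probability distribution w on a d-element set and K ≥ log(2d/ε)·d²/(2ε²), there exists a distribution over K-uniform distributions (vectors in Δ_d with all entries integer multiples of 1/K) whose mean is exactly w and which places probability at least 1 − ε on the ℓ₁-ball of radius ε around w. -/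
/-!
Write `K • w = m + f` with `m = ⌊K • w⌋₊` coordinatewise. The fractional part `f` lies in the
hypersimplex `{f ∈ [0,1]^d | ∑ f = r}`, where `r = K - ∑ m` is an integer smaller than `d`. Two
fractional coordinates of a point of the hypersimplex can be moved by `±t` in opposite directions,
so its extreme points are `0/1`-vectors and, by Krein–Milman, `f` is a convex combination of
`0/1`-vectors `x` with `∑ x = r`. Then `w` is the same convex combination of the grid points
`(m + x) / K`, each within ℓ₁-distance `2r / K ≤ 2(d - 1) / K` of `w`, and the bound on `K`
makes this at most `ε` when `ε < 1` (for `ε ≥ 1` there is nothing to prove).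
-/

open Finset
open scoped Pointwise

theorem mem_range_intCast_iff_of_mem_Icc {x : ℝ} (hx : x ∈ Set.Icc 0 1) :
    x ∈ Set.range (Int.cast : ℤ → ℝ) ↔ x = 0 ∨ x = 1 := by
  constructor
  · rintro ⟨n, rfl⟩
    have : 0 ≤ n ∧ n ≤ 1 := by exact_mod_cast And.intro hx.1 hx.2
    obtain rfl | rfl : n = 0 ∨ n = 1 := by omega
    all_goals simp
  · rintro (rfl | rfl)
    exacts [⟨0, Int.cast_zero⟩, ⟨1, Int.cast_one⟩]

theorem exists_ne_notMem_range_intCast {ι : Type*} [Fintype ι] {f : ι → ℝ} {z : ℤ}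
    (hsum : ∑ i, f i = z) {i : ι} (hi : f i ∉ Set.range (Int.cast : ℤ → ℝ)) :
    ∃ j ≠ i, f j ∉ Set.range (Int.cast : ℤ → ℝ) := by
  classical
  by_contra! h
  refine hi ⟨z - ∑ j ∈ univ.erase i, ⌊f j⌋, ?_⟩
  have hfloor : ∀ j ∈ univ.erase i, (⌊f j⌋ : ℝ) = f j := by
    intro j hj
    obtain ⟨n, hn⟩ := h j (ne_of_mem_erase hj)
    rw [← hn, Int.floor_intCast]
  push_cast
  rw [sum_congr rfl hfloor, ← hsum, ← add_sum_erase _ _ (mem_univ i)]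
  ring

theorem exists_fin_of_mem_convexHull {R E : Type*} [Field R] [LinearOrder R]
    [IsStrictOrderedRing R] [AddCommGroup E] [Module R E] {s : Set E} {x : E}
    (hx : x ∈ convexHull R s) :
    ∃ (N : ℕ) (q : Fin N → R) (v : Fin N → E), (∀ j, 0 ≤ q j) ∧ ∑ j, q j = 1 ∧
      (∀ j, v j ∈ s) ∧ ∑ j, q j • v j = x := by
  obtain ⟨ι, _, q, v, hq, hq1, hv, hx⟩ := mem_convexHull_iff_exists_fintype.1 hx
  let e := (Fintype.equivFin ι).symm
  refine ⟨Fintype.card ι, q ∘ e, v ∘ e, fun j => hq _, ?_, fun j => hv _, ?_⟩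
  · rwa [← e.sum_comp] at hq1
  · rwa [← e.sum_comp] at hx

def hypersimplex (ι : Type*) [Fintype ι] (r : ℝ) : Set (ι → ℝ) :=
  Set.Icc 0 1 ∩ {f | ∑ i, f i = r}

namespace hypersimplex

variable {ι : Type*} [Fintype ι]

theorem convex (r : ℝ) : Convex ℝ (hypersimplex ι r) :=
  (convex_Icc 0 1).inter (convex_hyperplane
    (IsLinearMap.mk (fun _ _ => sum_add_distrib) fun _ _ => (mul_sum ..).symm) r)

theorem isCompact (r : ℝ) : IsCompact (hypersimplex ι r) :=
  isCompact_Icc.inter_right (isClosed_eq (by fun_prop) continuous_const)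

theorem apply_mem_Icc {r : ℝ} {f : ι → ℝ} (hf : f ∈ hypersimplex ι r) (i : ι) :
    f i ∈ Set.Icc 0 1 :=
  ⟨hf.1.1 i, hf.1.2 i⟩

theorem sum_abs_sub_le {r : ℝ} {f g : ι → ℝ} (hf : f ∈ hypersimplex ι r)
    (hg : g ∈ hypersimplex ι r) : ∑ i, |f i - g i| ≤ 2 * r := by
  calc ∑ i, |f i - g i| ≤ ∑ i, (f i + g i) := by
        gcongr with i
        have := (apply_mem_Icc hf i).1
        have := (apply_mem_Icc hg i).1
        exact abs_sub_le_iff.2 ⟨by linarith, by linarith⟩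
    _ = 2 * r := by rw [sum_add_distrib, hf.2, hg.2]; ring

theorem lt_card [Nonempty ι] {r : ℝ} {f : ι → ℝ} (hf : f ∈ hypersimplex ι r)
    (hf_lt : ∀ i, f i < 1) : r < Fintype.card ι := calc
  r = ∑ i, f i := hf.2.symm
  _ < ∑ _i : ι, 1 := sum_lt_sum_of_nonempty univ_nonempty fun i _ => hf_lt i
  _ = Fintype.card ι := by simp

theorem add_smul_single_sub_single_mem {r : ℝ} {f : ι → ℝ} (hf : f ∈ hypersimplex ι r)
    [DecidableEq ι] {i j : ι} (hij : i ≠ j) {t : ℝ} (hi : f i + t ∈ Set.Icc 0 1)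
    (hj : f j - t ∈ Set.Icc 0 1) :
    f + t • (Pi.single i 1 - Pi.single j 1) ∈ hypersimplex ι r := by
  refine ⟨⟨fun k => ?_, fun k => ?_⟩, ?_⟩
  · rcases eq_or_ne k i with rfl | hki
    · simpa [hij] using hi.1
    rcases eq_or_ne k j with rfl | hkj
    · simpa [hij.symm, sub_eq_add_neg] using hj.1
    · simpa [hki, hkj] using (apply_mem_Icc hf k).1
  · rcases eq_or_ne k i with rfl | hki
    · simpa [hij] using hi.2
    rcases eq_or_ne k j with rfl | hkj
    · simpa [hij.symm, sub_eq_add_neg] using hj.2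
    · simpa [hki, hkj] using (apply_mem_Icc hf k).2
  · simpa [sum_add_distrib, ← mul_sum, sum_sub_distrib] using hf.2

theorem extremePoints_subset_zero_one (r : ℤ) :
    (hypersimplex ι r).extremePoints ℝ ⊆ {f | ∀ i, f i = 0 ∨ f i = 1} := by
  classical
  intro f hf i
  have hfr := _root_.extremePoints_subset hf
  have mem_Ioo : ∀ k, f k ∉ Set.range (Int.cast : ℤ → ℝ) → f k ∈ Set.Ioo 0 1 := fun k hk =>
    have hIcc := apply_mem_Icc hfr k
    have hk' := (mem_range_intCast_iff_of_mem_Icc hIcc).not.1 hk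
    ⟨lt_of_le_of_ne hIcc.1 (Ne.symm (not_or.1 hk').1), lt_of_le_of_ne hIcc.2 (not_or.1 hk').2⟩
  rw [← mem_range_intCast_iff_of_mem_Icc (apply_mem_Icc hfr i)]
  by_contra hi
  obtain ⟨j, hji, hj⟩ := exists_ne_notMem_range_intCast hfr.2 hi
  obtain ⟨hi0, hi1⟩ := mem_Ioo i hi
  obtain ⟨hj0, hj1⟩ := mem_Ioo j hj
  set t := min (min (f i) (1 - f i)) (min (f j) (1 - f j))
  have ht : 0 < t := lt_min (lt_min hi0 (by linarith)) (lt_min hj0 (by linarith))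
  have ht_le : t ≤ f i ∧ t ≤ 1 - f i ∧ t ≤ f j ∧ t ≤ 1 - f j :=
    ⟨(min_le_left _ _).trans (min_le_left _ _), (min_le_left _ _).trans (min_le_right _ _),
      (min_le_right _ _).trans (min_le_left _ _), (min_le_right _ _).trans (min_le_right _ _)⟩
  set u : ι → ℝ := Pi.single i 1 - Pi.single j 1
  have hplus := add_smul_single_sub_single_mem hfr hji.symm (t := t)
    ⟨by linarith, by linarith⟩ ⟨by linarith, by linarith⟩
  have hminus := add_smul_single_sub_single_mem hfr hji.symm (t := -t)
    ⟨by linarith, by linarith⟩ ⟨by linarith, by linarith⟩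
  have hseg : f ∈ openSegment ℝ (f + t • u) (f + (-t) • u) :=
    ⟨1 / 2, 1 / 2, by norm_num, by norm_num, by norm_num, by module⟩
  have hu : t • u = 0 := add_eq_left.1 ((mem_extremePoints.1 hf).2 _ hplus _ hminus hseg).1
  simpa [u, hji.symm, ht.ne'] using congrFun hu i

theorem subset_convexHull_vertices (r : ℤ) :
    hypersimplex ι r ⊆ convexHull ℝ (hypersimplex ι r ∩ {f | ∀ i, f i = 0 ∨ f i = 1}) := by
  have hfin : (hypersimplex ι r ∩ {f | ∀ i, f i = 0 ∨ f i = 1}).Finite :=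
    (Set.Finite.pi' fun _ => Set.toFinite {0, 1}).subset Set.inter_subset_right
  calc hypersimplex ι r
      = closure (convexHull ℝ ((hypersimplex ι r).extremePoints ℝ)) :=
        (closure_convexHull_extremePoints (isCompact r) (convex r)).symm
    _ ⊆ closure (convexHull ℝ (hypersimplex ι r ∩ {f | ∀ i, f i = 0 ∨ f i = 1})) :=
        closure_mono (convexHull_mono
          (Set.subset_inter _root_.extremePoints_subset (extremePoints_subset_zero_one r)))
    _ = convexHull ℝ (hypersimplex ι r ∩ {f | ∀ i, f i = 0 ∨ f i = 1}) :=
        (hfin.isClosed_convexHull ℝ).closure_eq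

end hypersimplex

theorem sub_floor_mem_hypersimplex {ι : Type*} [Fintype ι] (K : ℕ) {w : ι → ℝ}
    (hw : w ∈ stdSimplex ℝ ι) :
    (fun i => K * w i - ⌊K * w i⌋₊) ∈ hypersimplex ι ((K - ∑ i, ⌊K * w i⌋₊ : ℤ) : ℝ) := by
  have hKw : ∀ i, 0 ≤ (K : ℝ) * w i := fun i => mul_nonneg K.cast_nonneg (hw.1 i)
  refine ⟨⟨fun i => sub_nonneg.2 (Nat.floor_le (hKw i)), fun i => ?_⟩, ?_⟩
  · show (K : ℝ) * w i - ⌊(K : ℝ) * w i⌋₊ ≤ 1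
    linarith [Nat.lt_floor_add_one ((K : ℝ) * w i)]
  · simp [sum_sub_distrib, ← mul_sum, hw.2]

theorem mem_convexHull_grid_of_mem_stdSimplex {ι : Type*} [Fintype ι] {K : ℕ} (hK : 0 < K)
    {w : ι → ℝ} (hw : w ∈ stdSimplex ℝ ι) :
    w ∈ convexHull ℝ {v | v ∈ stdSimplex ℝ ι ∧ (∀ i, ∃ m : ℕ, v i = m / K) ∧
      ∑ i, |v i - w i| ≤ 2 * (Fintype.card ι - 1) / K} := by
  have hK' : (0 : ℝ) < K := Nat.cast_pos.2 hK
  set m : ι → ℝ := fun i => ⌊K * w i⌋₊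
  set f : ι → ℝ := fun i => K * w i - m i
  set r : ℤ := K - ∑ i, ⌊K * w i⌋₊
  have hf_lt : ∀ i, f i < 1 := fun i => by
    have := Nat.lt_floor_add_one (K * w i); simp only [f, m]; linarith
  have hf : f ∈ hypersimplex ι r := sub_floor_mem_hypersimplex K hw
  have hr : (r : ℝ) ≤ Fintype.card ι - 1 := by
    have : Nonempty ι := by
      by_contra h; simpa [not_nonempty_iff.1 h] using hw.2
    have : r ≤ Fintype.card ι - 1 :=
      Int.le_sub_one_of_lt (by exact_mod_cast hypersimplex.lt_card hf hf_lt)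
    exact_mod_cast this
  have hw_eq : (K : ℝ)⁻¹ • (m +ᵥ f) = w := by
    ext i; simp [f, hK'.ne']
  have hmem : (K : ℝ)⁻¹ • (m +ᵥ f) ∈
      convexHull ℝ ((K : ℝ)⁻¹ • (m +ᵥ (hypersimplex ι r ∩ {f | ∀ i, f i = 0 ∨ f i = 1}))) := by
    rw [convexHull_smul, convexHull_vadd]
    exact Set.smul_mem_smul_set (Set.vadd_mem_vadd_set
      (hypersimplex.subset_convexHull_vertices r hf))
  rw [hw_eq] at hmem
  refine convexHull_mono ?_ hmem
  have hv : ∀ (y : ι → ℝ) i, ((K : ℝ)⁻¹ • (m +ᵥ y)) i = (m i + y i) / K := fun y i => by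
    simp [div_eq_inv_mul, add_comm]
  rintro _ ⟨_, ⟨x, ⟨hx, hx01⟩, rfl⟩, rfl⟩
  beta_reduce
  refine ⟨⟨fun i => ?_, ?_⟩, fun i => ?_, ?_⟩
  · rw [hv]; have := (hypersimplex.apply_mem_Icc hx i).1; positivity
  · rw [sum_congr rfl fun i _ => hv x i, ← sum_div, sum_add_distrib, hx.2]
    simp only [m, r]
    push_cast
    field_simp
    ring
  · rcases hx01 i with h | h
    · exact ⟨⌊K * w i⌋₊, by rw [hv, h, add_zero]⟩
    · exact ⟨⌊K * w i⌋₊ + 1, by rw [hv, h]; push_cast; rfl⟩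
  · have hdist : ∀ i, ((K : ℝ)⁻¹ • (m +ᵥ x)) i - w i = (x i - f i) / K := fun i => by
      rw [hv, ← congrFun hw_eq i, hv]; ring
    calc ∑ i, |((K : ℝ)⁻¹ • (m +ᵥ x)) i - w i| = (∑ i, |x i - f i|) / K := by
          simp only [hdist, abs_div, Nat.abs_cast, sum_div]
      _ ≤ 2 * r / K := by gcongr; exact hypersimplex.sum_abs_sub_le hx hf
      _ ≤ 2 * (Fintype.card ι - 1) / K := by gcongr

theorem two_mul_sub_one_div_le {d K : ℕ} {ε : ℝ} (hε : 0 < ε) (hε1 : ε < 1)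
    (hK : Real.log (2 * d / ε) * d ^ 2 / (2 * ε ^ 2) ≤ K) :
    2 * ((d : ℝ) - 1) / K ≤ ε := by
  refine div_le_of_le_mul₀ (Nat.cast_nonneg K) hε.le ?_
  rcases lt_or_ge d 2 with hd | hd
  · have : (d : ℝ) ≤ 1 := by exact_mod_cast Nat.lt_succ_iff.1 hd
    nlinarith [(Nat.cast_nonneg K : (0 : ℝ) ≤ K)]
  have hd' : (2 : ℝ) ≤ d := by exact_mod_cast hd
  have hlog : 1 ≤ Real.log (2 * d / ε) := by
    rw [Real.le_log_iff_exp_le (by positivity), le_div_iff₀ hε]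
    nlinarith [Real.exp_one_lt_d9]
  have hK' : (d : ℝ) ^ 2 ≤ 2 * ε ^ 2 * K := by
    rw [← div_le_iff₀' (by positivity)]
    refine le_trans ?_ hK
    gcongr
    exact le_mul_of_one_le_left (by positivity) hlog
  nlinarith [sq_nonneg ((d : ℝ) - 2)]

theorem uniform_grid_decomposition_general (d K : ℕ) (hK : 0 < K)
    (w : Fin d → ℝ) (hw : w ∈ stdSimplex ℝ (Fin d))
    (ε : ℝ) (hε : 0 < ε)
    (hKbound : Real.log (2 * d / ε) * d ^ 2 / (2 * ε ^ 2) ≤ K) :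
    ∃ (N : ℕ) (q : Fin N → ℝ) (v : Fin N → Fin d → ℝ),
      (∀ j, 0 ≤ q j) ∧ (∑ j, q j = 1) ∧
      (∀ j, v j ∈ stdSimplex ℝ (Fin d)) ∧
      (∀ j i, ∃ m : ℕ, v j i = (m : ℝ) / K) ∧
      (∀ i, ∑ j, q j * v j i = w i) ∧
      1 - ε ≤ ∑ j ∈ Finset.univ.filter (fun j => ∑ i, |v j i - w i| ≤ ε), q j := by
  obtain ⟨N, q, v, hq, hq1, hv, hmean⟩ :=
    exists_fin_of_mem_convexHull (mem_convexHull_grid_of_mem_stdSimplex hK hw)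
  refine ⟨N, q, v, hq, hq1, fun j => (hv j).1, fun j => (hv j).2.1,
    fun i => by simpa using congrFun hmean i, ?_⟩
  rcases lt_or_ge ε 1 with hε1 | hε1
  · have hclose : ∀ j, ∑ i, |v j i - w i| ≤ ε := fun j =>
      (hv j).2.2.trans (by simpa using two_mul_sub_one_div_le hε hε1 hKbound)
    rw [filter_true_of_mem fun j _ => hclose j, hq1]
    linarith
  · exact (sub_nonpos.2 hε1).trans (sum_nonneg fun j _ => hq j)

/-- For any distribution `w` on a `d`-element set and `K ≥ log(2d/ε)·d²/(2ε²)`, there is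
a finitely supported distribution over `K`-uniform distributions (vectors in the simplex
all of whose entries are integer multiples of `1/K`) with mean exactly `w`, placing
probability at least `1 − ε` on the ℓ₁-ball of radius `ε` around `w`. -/
theorem uniform_grid_decomposition (d K : ℕ) (hd : 0 < d) (hK : 0 < K)
    (w : Fin d → ℝ) (hw : w ∈ stdSimplex ℝ (Fin d))
    (ε : ℝ) (hε : 0 < ε)
    (hKbound : Real.log (2 * d / ε) * d ^ 2 / (2 * ε ^ 2) ≤ K) :
    ∃ (N : ℕ) (q : Fin N → ℝ) (v : Fin N → Fin d → ℝ),
      (∀ j, 0 ≤ q j) ∧ (∑ j, q j = 1) ∧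
      (∀ j, v j ∈ stdSimplex ℝ (Fin d)) ∧
      (∀ j i, ∃ m : ℕ, v j i = (m : ℝ) / K) ∧
      (∀ i, ∑ j, q j * v j i = w i) ∧
      1 - ε ≤ ∑ j ∈ Finset.univ.filter (fun j => ∑ i, |v j i - w i| ≤ ε), q j :=
  uniform_grid_decomposition_general d K hK w hw ε hε hKbound
end

section
/- Let G : Δ(E×B) → ℝ be (α,β)-locally Hölder continuous (with respect to ℓ₁) and bounded in [−L, L], with E, B finite of sizes n_E, n_B. Define u_B(v) = Σ_{b} (Σ_e v_{e,b}) · G({v_{e,b}/Σ_{ẽ} v_{ẽ,b}}_{e}) − G({Σ_b v_{e,b}}_e) for v ∈ Δ(E×B). Then for any ε > 0 sufficiently small and any v, v' ∈ Δ(E×B) with |v − v'|₁ ≤ ε^{1/β}/2, one has |u_B(v) − u_B(v')| ≤ 3·n_B·ε·L + 3·α·ε^{1−β}. -/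
open Finset

variable {E B : Type*} [Fintype E] [Fintype B]

/-- Bob's utility as a function of the posterior `v ∈ Δ(E × B)` jointly over the event
and Bob's signal:
`u_B(v) = ∑_b (∑_e v_{e,b}) · G({v_{e,b}/∑_ẽ v_{ẽ,b}}_e) − G({∑_b v_{e,b}}_e)`.
(When `∑_e v_{e,b} = 0` the corresponding summand is `0 · G(·) = 0`.) -/
noncomputable def bobUtil (G : (E → ℝ) → ℝ) (v : E × B → ℝ) : ℝ :=
  (∑ b, (∑ e, v (e, b)) * G (fun e => v (e, b) / ∑ e', v (e', b))) -
    G (fun e => ∑ b, v (e, b))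

/-- `(α,β)`-local Hölder continuity of `G` on the simplex, in the ℓ₁ norm. -/
def LocallyHolder (G : (E → ℝ) → ℝ) (α β : ℝ) : Prop :=
  ∃ c ∈ Set.Ioo (0:ℝ) 1, ∀ x ∈ stdSimplex ℝ E, ∀ y ∈ stdSimplex ℝ E,
    (∑ e, |x e - y e|) ≤ c → |G x - G y| ≤ α * (∑ e, |x e - y e|) ^ β


/-!
`u_B(v)` is the sum over `b` of the perspectives `w_b · G(v_{·,b} / w_b)` of the columns of `v`
(`w_b` the column mass), minus `G` at the `E`-marginal. Take a column whose ℓ₁-distance to the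
corresponding column of `v'` is `d`. If both column masses exceed `2d/c`, the normalized columns are
`2d/w ≤ c` apart, so Hölder continuity and `|G| ≤ L` bound the change of the perspective by
`d·L + α (2d)^β` (using `w ≤ 1`). Otherwise both masses are at most `3d/c` and each perspective is
at most its mass times `L`. Summing over `b` and adding the marginal term gives the bound
`5 δ L / c + (|B| + 1) α (2δ)^β` with `δ = |v - v'|₁`, which is at most `3 α ε^(1-β)` as soon as
`ε^β` is small compared with `α c / L` and `2 / (|B| + 1)`.
-/

noncomputable def perspective (G : (E → ℝ) → ℝ) (u : E → ℝ) : ℝ :=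
  (∑ e, u e) * G (fun e => u e / ∑ e', u e')

def HolderWithinOnSimplex (G : (E → ℝ) → ℝ) (α β c : ℝ) : Prop :=
  ∀ x ∈ stdSimplex ℝ E, ∀ y ∈ stdSimplex ℝ E,
    (∑ e, |x e - y e|) ≤ c → |G x - G y| ≤ α * (∑ e, |x e - y e|) ^ β

theorem bobUtil_eq (G : (E → ℝ) → ℝ) (v : E × B → ℝ) :
    bobUtil G v = ∑ b, perspective G (fun e => v (e, b)) - G (fun e => ∑ b, v (e, b)) :=
  rfl

theorem abs_sum_sub_sum_le {ι M : Type*} [AddCommGroup M] [LinearOrder M] [IsOrderedAddMonoid M]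
    (s : Finset ι) (f g : ι → M) :
    |∑ i ∈ s, f i - ∑ i ∈ s, g i| ≤ ∑ i ∈ s, |f i - g i| := by
  rw [← Finset.sum_sub_distrib]
  exact Finset.abs_sum_le_sum_abs _ _

theorem div_sum_mem_stdSimplex {u : E → ℝ} (hu : ∀ e, 0 ≤ u e) (hw : 0 < ∑ e, u e) :
    (fun e => u e / ∑ e', u e') ∈ stdSimplex ℝ E :=
  ⟨fun e => div_nonneg (hu e) hw.le, by rw [← Finset.sum_div, div_self hw.ne']⟩

theorem marginal_mem_stdSimplex {v : E × B → ℝ} (hv : v ∈ stdSimplex ℝ (E × B)) :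
    (fun e => ∑ b, v (e, b)) ∈ stdSimplex ℝ E :=
  ⟨fun e => Finset.sum_nonneg fun b _ => hv.1 (e, b), by rw [← Fintype.sum_prod_type]; exact hv.2⟩

theorem sum_column_le_one {v : E × B → ℝ} (hv : v ∈ stdSimplex ℝ (E × B)) (b : B) :
    ∑ e, v (e, b) ≤ 1 :=
  calc ∑ e, v (e, b)
      ≤ ∑ b', ∑ e, v (e, b') :=
        Finset.single_le_sum (fun b' _ => Finset.sum_nonneg fun e _ => hv.1 (e, b'))
          (Finset.mem_univ b)
    _ = 1 := by rw [← Fintype.sum_prod_type_right]; exact hv.2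

theorem sum_abs_normalize_sub_le {u u' : E → ℝ} (hu' : ∀ e, 0 ≤ u' e)
    (hw : 0 < ∑ e, u e) (hw' : 0 < ∑ e, u' e) :
    ∑ e, |u e / ∑ e', u e' - u' e / ∑ e', u' e'| ≤ 2 * (∑ e, |u e - u' e|) / ∑ e, u e := by
  set w := ∑ e, u e
  set w' := ∑ e, u' e
  have hsplit : ∀ e, u e / w - u' e / w' = (u e - u' e) / w + u' e * (w' - w) / (w * w') := by
    intro e
    field_simp
    ring
  have hww' : |w' - w| ≤ ∑ e, |u e - u' e| := by
    rw [abs_sub_comm]; exact abs_sum_sub_sum_le _ _ _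
  calc ∑ e, |u e / w - u' e / w'|
      ≤ ∑ e, (|u e - u' e| / w + u' e * |w' - w| / (w * w')) := by
        refine Finset.sum_le_sum fun e _ => ?_
        rw [hsplit]
        refine (abs_add_le _ _).trans_eq ?_
        rw [abs_div, abs_div, abs_mul, abs_of_pos hw, abs_of_pos (mul_pos hw hw'),
          abs_of_nonneg (hu' e)]
    _ = (∑ e, |u e - u' e|) / w + |w' - w| / w := by
        rw [Finset.sum_add_distrib, ← Finset.sum_div, ← Finset.sum_div, ← Finset.sum_mul]
        change _ + w' * _ / _ = _
        field_simp
    _ ≤ 2 * (∑ e, |u e - u' e|) / w := by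
        rw [← add_div, two_mul]
        gcongr

theorem abs_perspective_le {G : (E → ℝ) → ℝ} {L : ℝ} (hBound : ∀ x ∈ stdSimplex ℝ E, |G x| ≤ L)
    {u : E → ℝ} (hu : ∀ e, 0 ≤ u e) :
    |perspective G u| ≤ (∑ e, u e) * L := by
  rcases (Finset.sum_nonneg fun e _ => hu e : (0 : ℝ) ≤ ∑ e, u e).eq_or_lt with hw | hw
  · simp [perspective, ← hw]
  · rw [perspective, abs_mul, abs_of_pos hw]
    exact mul_le_mul_of_nonneg_left (hBound _ (div_sum_mem_stdSimplex hu hw)) hw.le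

/-- Heavy columns (mass `> 2|u - u'|₁ / c`) have `c`-close normalizations, so Hölder continuity
applies to them. -/
theorem abs_perspective_sub_le_of_mass_gt {G : (E → ℝ) → ℝ} {α β L c : ℝ}
    (hα : 0 ≤ α) (hβ0 : 0 ≤ β) (hβ1 : β ≤ 1) (hH : HolderWithinOnSimplex G α β c)
    (hBound : ∀ x ∈ stdSimplex ℝ E, |G x| ≤ L) {u u' : E → ℝ}
    (hu : ∀ e, 0 ≤ u e) (hu' : ∀ e, 0 ≤ u' e) (hu1 : ∑ e, u e ≤ 1)
    (hw : 2 * ∑ e, |u e - u' e| < c * ∑ e, u e) (hw' : 2 * ∑ e, |u e - u' e| < c * ∑ e, u' e) :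
    |perspective G u - perspective G u'| ≤
      (∑ e, |u e - u' e|) * L + α * (2 * ∑ e, |u e - u' e|) ^ β := by
  set d := ∑ e, |u e - u' e|
  set w := ∑ e, u e
  set w' := ∑ e, u' e
  set x := fun e => u e / w
  set x' := fun e => u' e / w'
  have hd : 0 ≤ d := Finset.sum_nonneg fun e _ => abs_nonneg _
  have hw0 : 0 < w := by
    have h : 0 ≤ w := Finset.sum_nonneg fun e _ => hu e
    exact h.lt_of_ne fun h0 => by rw [← h0, mul_zero] at hw; linarith
  have hw'0 : 0 < w' := by
    have h : 0 ≤ w' := Finset.sum_nonneg fun e _ => hu' e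
    exact h.lt_of_ne fun h0 => by rw [← h0, mul_zero] at hw'; linarith
  have hxx' : ∑ e, |x e - x' e| ≤ 2 * d / w := sum_abs_normalize_sub_le hu' hw0 hw'0
  have hG : |G x - G x'| ≤ α * (2 * d / w) ^ β := by
    refine (hH x (div_sum_mem_stdSimplex hu hw0) x' (div_sum_mem_stdSimplex hu' hw'0)
      (hxx'.trans ((div_le_iff₀ hw0).2 hw.le))).trans ?_
    gcongr
  -- `w (2d/w)^β = (2d)^β w^(1-β) ≤ (2d)^β` since `w ≤ 1`.
  have hmass : w * (2 * d / w) ^ β ≤ (2 * d) ^ β := by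
    rw [Real.div_rpow (by positivity) hw0.le, mul_div_left_comm]
    refine mul_le_of_le_one_right (by positivity) ((div_le_one (by positivity)).2 ?_)
    exact Real.self_le_rpow_of_le_one hw0.le hu1 hβ1
  calc |w * G x - w' * G x'|
      = |(w - w') * G x' + w * (G x - G x')| := by ring_nf
    _ ≤ |w - w'| * |G x'| + w * |G x - G x'| := by
        refine (abs_add_le _ _).trans_eq ?_
        rw [abs_mul, abs_mul, abs_of_pos hw0]
    _ ≤ d * L + w * (α * (2 * d / w) ^ β) := by
        gcongr
        · exact abs_sum_sub_sum_le _ _ _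
        · exact hBound x' (div_sum_mem_stdSimplex hu' hw'0)
    _ ≤ d * L + α * (2 * d) ^ β := by
        rw [mul_left_comm]
        gcongr

theorem abs_perspective_sub_le {G : (E → ℝ) → ℝ} {α β L c : ℝ}
    (hα : 0 ≤ α) (hβ0 : 0 ≤ β) (hβ1 : β ≤ 1) (hc0 : 0 < c) (hc1 : c ≤ 1) (hL : 0 ≤ L)
    (hH : HolderWithinOnSimplex G α β c) (hBound : ∀ x ∈ stdSimplex ℝ E, |G x| ≤ L)
    {u u' : E → ℝ} (hu : ∀ e, 0 ≤ u e) (hu' : ∀ e, 0 ≤ u' e) (hu1 : ∑ e, u e ≤ 1) :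
    |perspective G u - perspective G u'| ≤
      5 * (∑ e, |u e - u' e|) * L / c + α * (2 * ∑ e, |u e - u' e|) ^ β := by
  set d := ∑ e, |u e - u' e|
  set w := ∑ e, u e
  set w' := ∑ e, u' e
  have hd : 0 ≤ d := Finset.sum_nonneg fun e _ => abs_nonneg _
  by_cases hmass : 2 * d < c * w ∧ 2 * d < c * w'
  · refine (abs_perspective_sub_le_of_mass_gt hα hβ0 hβ1 hH hBound hu hu' hu1 hmass.1
      hmass.2).trans (add_le_add_left ?_ _)
    rw [le_div_iff₀ hc0]
    nlinarith [mul_nonneg hd hL]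
  · -- a light column forces the other one to be light too, as `|w - w'| ≤ d`
    have hww' := abs_le.mp (abs_sum_sub_sum_le univ u u')
    have hlight : (w + w') * c ≤ 5 * d := by
      rcases not_and_or.mp hmass with h | h <;> nlinarith
    calc |perspective G u - perspective G u'|
        ≤ |perspective G u| + |perspective G u'| := abs_sub _ _
      _ ≤ w * L + w' * L :=
        add_le_add (abs_perspective_le hBound hu) (abs_perspective_le hBound hu')
      _ ≤ 5 * d * L / c := by
        rw [le_div_iff₀ hc0]
        nlinarith [mul_le_mul_of_nonneg_right hlight hL]
      _ ≤ 5 * d * L / c + α * (2 * d) ^ β := le_add_of_nonneg_right (by positivity)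

theorem abs_bobUtil_sub_le {G : (E → ℝ) → ℝ} {α β L c : ℝ}
    (hα : 0 ≤ α) (hβ0 : 0 ≤ β) (hβ1 : β ≤ 1) (hc0 : 0 < c) (hc1 : c ≤ 1)
    (hH : HolderWithinOnSimplex G α β c) (hBound : ∀ x ∈ stdSimplex ℝ E, |G x| ≤ L)
    {v v' : E × B → ℝ} (hv : v ∈ stdSimplex ℝ (E × B)) (hv' : v' ∈ stdSimplex ℝ (E × B))
    (hvv' : ∑ p, |v p - v' p| ≤ c) :
    |bobUtil G v - bobUtil G v'| ≤
      5 * (∑ p, |v p - v' p|) * L / c +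
        (Fintype.card B + 1) * (α * (2 * ∑ p, |v p - v' p|) ^ β) := by
  set δ := ∑ p, |v p - v' p| with hδdef
  have hδ0 : 0 ≤ δ := Finset.sum_nonneg fun p _ => abs_nonneg _
  set d : B → ℝ := fun b => ∑ e, |v (e, b) - v' (e, b)|
  have hL : 0 ≤ L := (abs_nonneg _).trans (hBound _ (marginal_mem_stdSimplex hv))
  have hδ : ∑ b, d b = δ := (Fintype.sum_prod_type_right fun p => |v p - v' p|).symm
  have hdδ : ∀ b, d b ≤ δ := fun b => hδ ▸ Finset.single_le_sum (f := d)
    (fun b _ => Finset.sum_nonneg fun e _ => abs_nonneg _) (mem_univ b)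
  have hcolumn : ∀ b, |perspective G (fun e => v (e, b)) - perspective G (fun e => v' (e, b))| ≤
      5 * d b * L / c + α * (2 * δ) ^ β := fun b =>
    (abs_perspective_sub_le hα hβ0 hβ1 hc0 hc1 hL hH hBound (fun e => hv.1 (e, b))
      (fun e => hv'.1 (e, b)) (sum_column_le_one hv b)).trans
      (by gcongr; exact hdδ b)
  have hmarginal : ∑ e, |∑ b, v (e, b) - ∑ b, v' (e, b)| ≤ δ := by
    rw [hδdef, Fintype.sum_prod_type]
    exact Finset.sum_le_sum fun e _ => abs_sum_sub_sum_le _ _ _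
  have hG : |G (fun e => ∑ b, v (e, b)) - G (fun e => ∑ b, v' (e, b))| ≤ α * (2 * δ) ^ β :=
    (hH _ (marginal_mem_stdSimplex hv) _ (marginal_mem_stdSimplex hv')
      (hmarginal.trans hvv')).trans
      (by gcongr; linarith)
  calc |bobUtil G v - bobUtil G v'|
      = |∑ b, (perspective G (fun e => v (e, b)) - perspective G (fun e => v' (e, b))) -
          (G (fun e => ∑ b, v (e, b)) - G (fun e => ∑ b, v' (e, b)))| := by
        rw [bobUtil_eq, bobUtil_eq, Finset.sum_sub_distrib]; ring_nf
    _ ≤ ∑ b, (5 * d b * L / c + α * (2 * δ) ^ β) + α * (2 * δ) ^ β :=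
        (abs_sub _ _).trans (add_le_add
          ((Finset.abs_sum_le_sum_abs _ _).trans (Finset.sum_le_sum fun b _ => hcolumn b)) hG)
    _ = 5 * δ * L / c + (Fintype.card B + 1) * (α * (2 * δ) ^ β) := by
        simp only [Finset.sum_add_distrib, ← Finset.sum_div, ← Finset.sum_mul, ← Finset.mul_sum,
          hδ, Finset.sum_const, Finset.card_univ, nsmul_eq_mul]
        ring

/-- Splitting `ε = ε^β · ε^(1-β)`, each error term is `ε^(1-β)` times a multiple of `ε^β`. -/
theorem error_budget_le {α β L c K δ ε : ℝ} (hα : 0 ≤ α) (hβ0 : 0 < β) (hβ1 : β ≤ 1)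
    (hc0 : 0 < c) (hL : 0 ≤ L) (hK : 0 ≤ K) (hε : 0 < ε) (hε1 : ε ≤ 1) (hδ0 : 0 ≤ δ)
    (hδ : δ ≤ ε ^ (1 / β) / 2) (hεL : 5 * L * ε ^ β ≤ 2 * α * c) (hεK : (K + 1) * ε ^ β ≤ 2) :
    5 * δ * L / c + (K + 1) * (α * (2 * δ) ^ β) ≤ 3 * α * ε ^ (1 - β) := by
  have hδε : 2 * δ ≤ ε := by
    linarith [Real.rpow_le_self_of_le_one hε.le hε1 (one_le_one_div hβ0 hβ1)]
  have h2δβ : (2 * δ) ^ β ≤ ε :=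
    calc (2 * δ) ^ β ≤ (ε ^ (1 / β)) ^ β := by gcongr; linarith
      _ = ε := by rw [← Real.rpow_mul hε.le, one_div_mul_cancel hβ0.ne', Real.rpow_one]
  have hsplit : ε = ε ^ β * ε ^ (1 - β) := by rw [← Real.rpow_add hε]; simp
  have hdist : 5 * δ * L / c ≤ α * ε ^ (1 - β) := by
    rw [div_le_iff₀ hc0]
    calc 5 * δ * L ≤ 5 * (ε / 2) * L := mul_le_mul_of_nonneg_right (by linarith) hL
      _ = 5 * L * ε ^ β * ε ^ (1 - β) / 2 := by linear_combination (5 / 2 * L) * hsplit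
      _ ≤ 2 * α * c * ε ^ (1 - β) / 2 := by gcongr ?_ * _ / _
      _ = α * ε ^ (1 - β) * c := by ring
  have hmass : (K + 1) * (α * (2 * δ) ^ β) ≤ 2 * α * ε ^ (1 - β) :=
    calc (K + 1) * (α * (2 * δ) ^ β) ≤ (K + 1) * (α * ε) := by gcongr
      _ = (K + 1) * ε ^ β * (α * ε ^ (1 - β)) := by linear_combination (K + 1) * α * hsplit
      _ ≤ 2 * (α * ε ^ (1 - β)) := by gcongr
      _ = 2 * α * ε ^ (1 - β) := by ring
  linarith

/-- If `G` is `(α,β)`-locally Hölder continuous and bounded in `[−L, L]`, then for all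
sufficiently small `ε > 0` and posteriors `v, v'` with `|v − v'|₁ ≤ ε^{1/β}/2`,
`|u_B(v) − u_B(v')| ≤ 3·|B|·ε·L + 3·α·ε^{1−β}`. -/
theorem bobUtil_holder_continuous
    (G : (E → ℝ) → ℝ) (α β L : ℝ) (hα : 0 < α) (hβ0 : 0 < β) (hβ1 : β ≤ 1)
    (hHolder : LocallyHolder G α β)
    (hBound : ∀ x ∈ stdSimplex ℝ E, |G x| ≤ L) :
    ∃ ε₀ > (0:ℝ), ∀ ε : ℝ, 0 < ε → ε ≤ ε₀ →
      ∀ v ∈ stdSimplex ℝ (E × B), ∀ v' ∈ stdSimplex ℝ (E × B),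
        (∑ p, |v p - v' p|) ≤ ε ^ ((1:ℝ)/β) / 2 →
        |bobUtil G v - bobUtil G v'| ≤
          3 * (Fintype.card B : ℝ) * ε * L + 3 * α * ε ^ ((1:ℝ) - β) := by
  obtain ⟨c, ⟨hc0, hc1⟩, hH⟩ := hHolder
  set K : ℝ := (Fintype.card B : ℝ)
  set t := min (2 * α * c / (5 * (|L| + 1))) (2 / (K + 1))
  refine ⟨min c (t ^ (1 / β)), by positivity, ?_⟩
  intro ε hε hεε₀ v hv v' hv' hvv'
  have hL : 0 ≤ L := (abs_nonneg _).trans (hBound _ (marginal_mem_stdSimplex hv))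
  have hεc : ε ≤ c := hεε₀.trans (min_le_left _ _)
  have hεt : ε ^ β ≤ t := by
    rw [← Real.le_rpow_inv_iff_of_pos hε.le (by positivity) hβ0, ← one_div]
    exact hεε₀.trans (min_le_right _ _)
  have hεL : 5 * L * ε ^ β ≤ 2 * α * c := by
    have := (le_div_iff₀ (by positivity)).1 (hεt.trans (min_le_left _ _))
    nlinarith [le_abs_self L, Real.rpow_nonneg hε.le β]
  have hεK : (K + 1) * ε ^ β ≤ 2 := by
    rw [mul_comm, ← le_div_iff₀ (by positivity)]
    exact hεt.trans (min_le_right _ _)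
  have hvv'c : ∑ p, |v p - v' p| ≤ c := by
    linarith [Real.rpow_le_self_of_le_one hε.le (hεc.trans hc1.le) (one_le_one_div hβ0 hβ1)]
  calc |bobUtil G v - bobUtil G v'|
      ≤ 5 * (∑ p, |v p - v' p|) * L / c + (K + 1) * (α * (2 * ∑ p, |v p - v' p|) ^ β) :=
        abs_bobUtil_sub_le hα.le hβ0.le hβ1 hc0 hc1.le hH hBound hv hv' hvv'c
    _ ≤ 3 * α * ε ^ (1 - β) :=
        error_budget_le hα.le hβ0 hβ1 hc0 hL (Nat.cast_nonneg _) hε (hεc.trans hc1.le)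
          (by positivity) hvv' hεL hεK
    _ ≤ 3 * K * ε * L + 3 * α * ε ^ (1 - β) := le_add_of_nonneg_left (by positivity)
end
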